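/- Suppose A ⊆ ℤ^r is an (n_1, ..., n_r)-strongly r-dimensional finite set. Then ∫_{[0,1]^r} |∑_{a ∈ A} e(a·t)| dt ≥ C_MPS^r · log(n_1) ⋯ log(n_r), where C_MPS is the absolute constant from the McGehee–Pigno–Smith inequality. -/

import Mathlib

open MeasureTheory

/-- `e z = e^{2πiz}`. -/
noncomputable def e (x : ℝ) : ℂ := Complex.exp (2 * Real.pi * Complex.I * x)

/-- `A ⊆ ℤ^{r+1}` is `(n 0, …, n r)`-strongly `(r+1)`-dimensional:
for `r = 0` this means `|A| ≥ n 0`; inductively it means the first-coordinate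
projection `A_1` has `|A_1| ≥ n 0` and every fibre `A_1^*(a_1)` (with first
coordinate deleted) is `(n 1, …, n r)`-strongly `r`-dimensional. -/
def StronglyDim : (r : ℕ) → Finset (Fin (r + 1) → ℤ) → (Fin (r + 1) → ℕ) → Prop
  | 0, A, n => n 0 ≤ A.card
  | r + 1, A, n =>
      n 0 ≤ (A.image (fun v => v 0)).card ∧
      ∀ a1 ∈ A.image (fun v => v 0),
        StronglyDim r ((A.filter (fun v => v 0 = a1)).image Fin.tail) (Fin.tail n)

/-!
Slice `[0,1]^{r+1}` as `[0,1] × [0,1]^r`. For fixed `s ∈ [0,1]^r` the exponential sum of `A`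
is a one-variable trigonometric polynomial `∑_b g_b(s) e(b x)` over the distinct first
coordinates `b_0 < b_1 < ⋯` of `A`, whose coefficient `g_b` is the exponential sum of the fibre
of `A` over `b`. McGehee–Pigno–Smith bounds its `x`-integral below by
`C ∑_j |g_{b_j}(s)| / (j+1)`; integrating in `s` and bounding each fibre integral by induction
leaves `C K ∑_{j < |A_1|} 1/(j+1) ≥ C K log n_1`.
-/

open Finset

theorem continuous_e : Continuous e := by unfold e; fun_prop

theorem e_add (x y : ℝ) : e (x + y) = e x * e y := by
  simp only [e, ← Complex.exp_add]; push_cast; ring_nf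

def McGeheePignoSmith (C : ℝ) : Prop :=
  ∀ (n : ℕ) (a : Fin n → ℤ) (u : Fin n → ℂ), StrictMono a →
    (∫ t in (0 : ℝ)..1, ‖∑ j, u j * e ((a j : ℝ) * t)‖) ≥
      C * ∑ j, ‖u j‖ / (j.1 + 1 : ℝ)

theorem McGeheePignoSmith.le_integral_norm_sum {C : ℝ} (hMPS : McGeheePignoSmith C)
    (B : Finset ℤ) (u : ℤ → ℂ) :
    C * ∑ j : Fin #B, ‖u (B.orderEmbOfFin rfl j)‖ / (j.1 + 1 : ℝ) ≤
      ∫ t in (0 : ℝ)..1, ‖∑ b ∈ B, u b * e (b * t)‖ := by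
  conv_rhs => rw [← B.map_orderEmbOfFin_univ rfl]
  simp only [sum_map, RelEmbedding.coe_toEmbedding]
  exact hMPS _ _ _ (B.orderEmbOfFin rfl).strictMono

theorem log_le_sum_one_div_succ {m k : ℕ} (hm : m ≤ k) :
    Real.log m ≤ ∑ j : Fin k, 1 / (j.1 + 1 : ℝ) := by
  have harmonic_eq : ∑ j : Fin k, 1 / (j.1 + 1 : ℝ) = harmonic k := by
    simp [harmonic, Fin.sum_univ_eq_sum_range (fun i => ((i : ℝ) + 1)⁻¹)]
  rw [harmonic_eq]
  calc Real.log m ≤ Real.log (k + 1 : ℕ) := by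
        rcases Nat.eq_zero_or_pos m with rfl | hm0
        · simpa using Real.log_natCast_nonneg (k + 1)
        · exact Real.log_le_log (by exact_mod_cast hm0) (by exact_mod_cast Nat.le_succ_of_le hm)
    _ ≤ harmonic k := log_add_one_le_harmonic k

theorem mul_log_le_sum_div_succ {K : ℝ} (hK : 0 ≤ K) {m k : ℕ} (hm : m ≤ k)
    {x : Fin k → ℝ} (hx : ∀ j, K ≤ x j) :
    K * Real.log m ≤ ∑ j : Fin k, x j / (j.1 + 1 : ℝ) :=
  calc K * Real.log m ≤ K * ∑ j : Fin k, 1 / (j.1 + 1 : ℝ) := by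
        gcongr; exact log_le_sum_one_div_succ hm
    _ = ∑ j : Fin k, K / (j.1 + 1 : ℝ) := by simp_rw [mul_sum, mul_one_div]
    _ ≤ _ := sum_le_sum fun j _ => by gcongr; exact hx j

theorem volume_restrict_Icc_pi {ι : Type*} [Fintype ι] (a b : ι → ℝ) :
    (volume : Measure (ι → ℝ)).restrict (Set.Icc a b) =
      Measure.pi fun i => volume.restrict (Set.Icc (a i) (b i)) := by
  rw [← Set.pi_univ_Icc, volume_pi, Measure.restrict_pi_pi]

theorem setIntegral_Icc_fin_succ {k : ℕ} {f : (Fin (k + 1) → ℝ) → ℝ} (hf : Continuous f) :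
    ∫ t in Set.Icc (0 : Fin (k + 1) → ℝ) 1, f t =
      ∫ s in Set.Icc (0 : Fin k → ℝ) 1, ∫ x in (0 : ℝ)..1, f (Fin.cons x s) := by
  have hφ := measurePreserving_piFinSuccAbove
    (fun _ : Fin (k + 1) => volume.restrict (Set.Icc (0 : ℝ) 1)) 0
  have hf_int : Integrable f (volume.restrict (Set.Icc (0 : Fin (k + 1) → ℝ) 1)) :=
    hf.continuousOn.integrableOn_compact isCompact_Icc
  simp only [volume_restrict_Icc_pi, Pi.zero_apply, Pi.one_apply] at hf_int ⊢
  rw [← hφ.symm.integral_comp', integral_prod_symm]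
  · simp only [MeasurableEquiv.piFinSuccAbove_symm_apply, Fin.insertNthEquiv_zero,
      integral_Icc_eq_integral_Ioc, intervalIntegral.integral_of_le zero_le_one]
    rfl
  · exact hφ.symm.integrable_comp_emb (MeasurableEquiv.measurableEmbedding _) |>.mpr hf_int

theorem setIntegral_Icc_fin_zero (f : (Fin 0 → ℝ) → ℝ) :
    ∫ s in Set.Icc (0 : Fin 0 → ℝ) 1, f s = f 0 := by
  rw [volume_restrict_Icc_pi, Measure.pi_of_empty _ 0, integral_dirac]

section ExpSum

variable {k : ℕ}

noncomputable def expSum (A : Finset (Fin k → ℤ)) (t : Fin k → ℝ) : ℂ :=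
  ∑ v ∈ A, e (∑ i, (v i : ℝ) * t i)

def fibre (A : Finset (Fin (k + 1) → ℤ)) (b : ℤ) : Finset (Fin k → ℤ) :=
  (A.filter (fun v => v 0 = b)).image Fin.tail

theorem continuous_expSum (A : Finset (Fin k → ℤ)) : Continuous (expSum A) :=
  continuous_finsetSum _ fun _ _ => continuous_e.comp (by fun_prop)

theorem norm_expSum_fin_zero (A : Finset (Fin 0 → ℤ)) (t : Fin 0 → ℝ) :
    ‖expSum A t‖ = #A := by
  simp [expSum, e]

theorem fibre_nonempty {A : Finset (Fin (k + 1) → ℤ)} {b : ℤ} (hb : b ∈ A.image (· 0)) :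
    (fibre A b).Nonempty := by
  obtain ⟨v, hv, rfl⟩ := mem_image.mp hb
  exact ⟨Fin.tail v, mem_image_of_mem _ (mem_filter.mpr ⟨hv, rfl⟩)⟩

theorem expSum_cons (A : Finset (Fin (k + 1) → ℤ)) (x : ℝ) (s : Fin k → ℝ) :
    expSum A (Fin.cons x s) = ∑ b ∈ A.image (· 0), expSum (fibre A b) s * e (b * x) := by
  rw [expSum, ← sum_fiberwise_of_maps_to (fun v hv => mem_image_of_mem (· 0) hv)]
  refine sum_congr rfl fun b _ => ?_
  have tail_injOn :
      Set.InjOn Fin.tail (A.filter (fun v => v 0 = b) : Set (Fin (k + 1) → ℤ)) := by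
    intro v hv w hw h
    simp only [coe_filter, Set.mem_ofPred_eq] at hv hw
    exact Fin.cons_self_tail v ▸ Fin.cons_self_tail w ▸ by rw [hv.2, hw.2, h]
  rw [expSum, fibre, sum_image tail_injOn, sum_mul]
  refine sum_congr rfl fun v hv => ?_
  simp only [Fin.sum_univ_succ, Fin.cons_zero, Fin.cons_succ, Fin.tail, (mem_filter.mp hv).2]
  rw [add_comm, e_add]

end ExpSum

theorem McGeheePignoSmith.sum_integral_fibre_div_succ_le {C : ℝ} (hMPS : McGeheePignoSmith C)
    {k : ℕ} (A : Finset (Fin (k + 1) → ℤ)) :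
    C * ∑ j : Fin #(A.image (· 0)),
        (∫ s in Set.Icc (0 : Fin k → ℝ) 1,
          ‖expSum (fibre A ((A.image (· 0)).orderEmbOfFin rfl j)) s‖) / (j.1 + 1 : ℝ) ≤
      ∫ t in Set.Icc (0 : Fin (k + 1) → ℝ) 1, ‖expSum A t‖ := by
  set B := A.image (· 0)
  set g := fun (j : Fin #B) s => ‖expSum (fibre A (B.orderEmbOfFin rfl j)) s‖
  have hg_int : ∀ j, IntegrableOn (g j) (Set.Icc 0 1) := fun j =>
    (continuous_expSum _).norm.continuousOn.integrableOn_compact isCompact_Icc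
  have hslice_cont : Continuous fun s => ∫ x in (0 : ℝ)..1, ‖expSum A (Fin.cons x s)‖ :=
    intervalIntegral.continuous_parametric_intervalIntegral_of_continuous'
      (f := fun s x => ‖expSum A (Fin.cons x s)‖)
      ((continuous_expSum A).norm.comp (by fun_prop :
        Continuous fun p : (Fin k → ℝ) × ℝ => (Fin.cons p.2 p.1 : Fin (k + 1) → ℝ))) 0 1
  rw [setIntegral_Icc_fin_succ (continuous_expSum A).norm]
  calc C * ∑ j, (∫ s in Set.Icc 0 1, g j s) / (j.1 + 1 : ℝ)
      = ∫ s in Set.Icc 0 1, C * ∑ j, g j s / (j.1 + 1 : ℝ) := by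
        rw [integral_const_mul, integral_finsetSum _ fun j _ => (hg_int j).div_const _]
        simp_rw [integral_div]
    _ ≤ ∫ s in Set.Icc 0 1, ∫ x in (0 : ℝ)..1, ‖expSum A (Fin.cons x s)‖ := by
        refine integral_mono
          ((integrable_finsetSum _ fun j _ => (hg_int j).div_const _).const_mul C)
          (hslice_cont.continuousOn.integrableOn_compact isCompact_Icc) fun s => ?_
        simpa only [expSum_cons] using hMPS.le_integral_norm_sum B (fun b => expSum (fibre A b) s)

theorem McGeheePignoSmith.mul_log_le_integral_norm_expSum {C : ℝ} (hMPS : McGeheePignoSmith C)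
    (hC : 0 ≤ C) {K : ℝ} (hK : 0 ≤ K) {k m : ℕ} {A : Finset (Fin (k + 1) → ℤ)}
    (hm : m ≤ #(A.image (· 0)))
    (hfibre : ∀ b ∈ A.image (· 0),
      K ≤ ∫ s in Set.Icc (0 : Fin k → ℝ) 1, ‖expSum (fibre A b) s‖) :
    C * (K * Real.log m) ≤ ∫ t in Set.Icc (0 : Fin (k + 1) → ℝ) 1, ‖expSum A t‖ :=
  calc C * (K * Real.log m)
      ≤ C * ∑ j : Fin #(A.image (· 0)),
          (∫ s in Set.Icc 0 1, ‖expSum (fibre A ((A.image (· 0)).orderEmbOfFin rfl j)) s‖) /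
            (j.1 + 1 : ℝ) := by
        gcongr
        exact mul_log_le_sum_div_succ hK hm fun j => hfibre _ (orderEmbOfFin_mem _ _ j)
    _ ≤ _ := hMPS.sum_integral_fibre_div_succ_le A

/-- Theorem 1.3: if `A ⊆ ℤ^r` (here `r = r'+1 ≥ 1`) is `(n_1,…,n_r)`-strongly
`r`-dimensional, then `∫_{[0,1]^r} |∑_{a∈A} e(a·t)| dt ≥ C_MPS^r log(n_1)⋯log(n_r)`,
where `C_MPS` is the constant from the McGehee–Pigno–Smith inequality. -/
theorem littlewood_strongly_multidimensional
    (C : ℝ) (hC : 0 < C)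
    (hMPS : ∀ (n : ℕ) (a : Fin n → ℤ) (u : Fin n → ℂ), StrictMono a →
      (∫ t in (0:ℝ)..1, ‖∑ j, u j * e ((a j : ℝ) * t)‖) ≥
        C * ∑ j, ‖u j‖ / (j.1 + 1 : ℝ))
    (r' : ℕ) (n : Fin (r' + 1) → ℕ) (A : Finset (Fin (r' + 1) → ℤ))
    (hA : StronglyDim r' A n) :
    (∫ t in Set.Icc (0 : Fin (r' + 1) → ℝ) 1,
        ‖∑ v ∈ A, e (∑ i, (v i : ℝ) * t i)‖) ≥
      C ^ (r' + 1) * ∏ i, Real.log (n i) := by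
  have hMPS : McGeheePignoSmith C := hMPS
  induction r' with
  | zero =>
    have hcard : #(A.image (· 0)) = #A :=
      card_image_of_injective _ fun v w h => funext fun i => by rwa [Fin.fin_one_eq_zero i]
    have hfibre (b : ℤ) (hb : b ∈ A.image (· 0)) :
        1 ≤ ∫ s in Set.Icc (0 : Fin 0 → ℝ) 1, ‖expSum (fibre A b) s‖ := by
      rw [setIntegral_Icc_fin_zero, norm_expSum_fin_zero]
      exact_mod_cast (fibre_nonempty hb).card_pos
    simpa [expSum] using hMPS.mul_log_le_integral_norm_expSum hC.le zero_le_one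
      (le_of_le_of_eq hA hcard.symm) hfibre
  | succ r ih =>
    obtain ⟨hcard, hfibre⟩ := hA
    have hfibre_bound (b : ℤ) (hb : b ∈ A.image (· 0)) :
        C ^ (r + 1) * ∏ i, Real.log (Fin.tail n i) ≤
          ∫ s in Set.Icc 0 1, ‖expSum (fibre A b) s‖ :=
      ih (Fin.tail n) _ (hfibre b hb)
    calc C ^ (r + 1 + 1) * ∏ i, Real.log (n i)
        = C * ((C ^ (r + 1) * ∏ i, Real.log (Fin.tail n i)) * Real.log (n 0)) := by
          simp only [Fin.prod_univ_succ, Fin.tail]; ring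
      _ ≤ ∫ t in Set.Icc 0 1, ‖expSum A t‖ :=
          hMPS.mul_log_le_integral_norm_expSum hC.le (by positivity) hcard hfibre_bound
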